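/- In d = 9, the function f₁(ρ) = ρ(7-3ρ²)/(7+5ρ²)³ satisfies on (0,1) the ODE (1-ρ²)f'' + (8/ρ − 2(λ+3)ρ)f' − ((λ+2)(λ+3) + 8/ρ² − V(ρ))f = 0 with λ = 0, where V(ρ) = 480(7-ρ²)/(7+5ρ²)². -/

import Mathlib

/-! Writing `w = 7 + 5ρ²`, one gets `f' = (49 - 238ρ² + 45ρ⁴)/w⁴` and
`f'' = -4ρ(1323 - 2100ρ² + 225ρ⁴)/w⁵`; multiplied by `ρ² w⁵`, the ODE becomes a polynomial
identity. -/

lemma HasDerivAt.div_pow {p q : ℝ → ℝ} {p' q' x : ℝ} (n : ℕ) (hp : HasDerivAt p p' x)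
    (hq : HasDerivAt q q' x) (hqx : q x ≠ 0) :
    HasDerivAt (fun y => p y / q y ^ n) ((p' * q x - n * p x * q') / q x ^ (n + 1)) x := by
  refine (hp.fun_div (hq.fun_pow n) (pow_ne_zero n hqx)).congr_deriv ?_
  rcases n with _ | k
  · field_simp
    ring
  · field_simp
    push_cast
    ring

lemma hasDerivAt_seven_add_five_mul_sq (x : ℝ) :
    HasDerivAt (fun y : ℝ => 7 + 5 * y ^ 2) (10 * x) x :=
  (((hasDerivAt_pow 2 x).const_mul 5).const_add 7).congr_deriv (by norm_num; ring)

lemma seven_add_five_mul_sq_ne_zero (x : ℝ) : 7 + 5 * x ^ 2 ≠ 0 := by positivity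

lemma hasDerivAt_f₁ (x : ℝ) :
    HasDerivAt (fun y : ℝ => y * (7 - 3 * y ^ 2) / (7 + 5 * y ^ 2) ^ 3)
      ((49 - 238 * x ^ 2 + 45 * x ^ 4) / (7 + 5 * x ^ 2) ^ 4) x := by
  have hp : HasDerivAt (fun y : ℝ => y * (7 - 3 * y ^ 2)) (7 - 9 * x ^ 2) x :=
    ((hasDerivAt_id' x).fun_mul (((hasDerivAt_pow 2 x).const_mul 3).const_sub 7)).congr_deriv
      (by norm_num; ring)
  convert hp.div_pow 3 (hasDerivAt_seven_add_five_mul_sq x)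
    (seven_add_five_mul_sq_ne_zero x) using 1
  ring

lemma hasDerivAt_deriv_f₁ (x : ℝ) :
    HasDerivAt (fun y : ℝ => (49 - 238 * y ^ 2 + 45 * y ^ 4) / (7 + 5 * y ^ 2) ^ 4)
      (-4 * x * (1323 - 2100 * x ^ 2 + 225 * x ^ 4) / (7 + 5 * x ^ 2) ^ 5) x := by
  have hp : HasDerivAt (fun y : ℝ => 49 - 238 * y ^ 2 + 45 * y ^ 4) (-476 * x + 180 * x ^ 3) x :=
    ((((hasDerivAt_pow 2 x).const_mul 238).const_sub 49).fun_add
      ((hasDerivAt_pow 4 x).const_mul 45)).congr_deriv (by norm_num; ring)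
  convert hp.div_pow 4 (hasDerivAt_seven_add_five_mul_sq x)
    (seven_add_five_mul_sq_ne_zero x) using 1
  ring

/-- In `d = 9`, `f₁(ρ) = ρ(7-3ρ²)/(7+5ρ²)³` solves the `ℓ = 1` spectral ODE
(with centrifugal term `8/ρ²`) with `λ = 0` and potential
`V(ρ) = 480(7-ρ²)/(7+5ρ²)²` on `(0,1)`. -/
theorem spectral_ode_l1_lam0
    (f V : ℝ → ℝ)
    (hf : ∀ ρ : ℝ, f ρ = ρ * (7 - 3 * ρ ^ 2) / (7 + 5 * ρ ^ 2) ^ 3)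
    (hV : ∀ ρ : ℝ, V ρ = 480 * (7 - ρ ^ 2) / (7 + 5 * ρ ^ 2) ^ 2)
    (lam : ℝ) (hlam : lam = 0) :
    ∀ ρ ∈ Set.Ioo (0 : ℝ) 1,
      (1 - ρ ^ 2) * deriv (deriv f) ρ
        + (8 / ρ - 2 * (lam + 3) * ρ) * deriv f ρ
        - ((lam + 2) * (lam + 3) + 8 / ρ ^ 2 - V ρ) * f ρ = 0 := by
  intro ρ hρ
  have hf' : deriv f = fun y => (49 - 238 * y ^ 2 + 45 * y ^ 4) / (7 + 5 * y ^ 2) ^ 4 := by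
    rw [funext hf]
    exact funext fun y => (hasDerivAt_f₁ y).deriv
  rw [hf', (hasDerivAt_deriv_f₁ ρ).deriv, hf, hV, hlam]
  have hρ0 : ρ ≠ 0 := hρ.1.ne'
  have hw := seven_add_five_mul_sq_ne_zero ρ
  field_simp
  ring
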